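/- arXiv:2005.01529 — 5 statements merged into one kernel-verified Lean document; each statement's English description precedes it below -/
import Mathlib

section
/- Continuous-time higher order tuner stability: let φ: ℝ → ℝ^N be continuously differentiable, N_t = 1 + ‖φ(t)‖², e(t) = (θ(t) − θ*)ᵀφ(t), and consider the ODE system ϑ̇ = −(γ/N_t)φ e, θ̇ = −β(θ − ϑ) with β > 0 and 0 < γ ≤ β/2. Then V(t) = (1/γ)‖ϑ(t) − θ*‖² + (1/γ)‖θ(t) − ϑ(t)‖² satisfies V̇(t) ≤ −e(t)²/N_t ≤ 0 along solutions. -/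
open scoped RealInnerProductSpace

/-- Continuous-time higher order tuner: along solutions of
`ϑ̇ = -(γ/𝒩_t) e φ`, `θ̇ = -β(θ-ϑ)` with `β > 0`, `0 < γ ≤ β/2`, the Lyapunov function
`V = (1/γ)‖ϑ-θ*‖² + (1/γ)‖θ-ϑ‖²` satisfies `V̇ ≤ -e²/𝒩_t ≤ 0`. -/
theorem stmt5 (n : ℕ) (β γ : ℝ) (hβ : 0 < β) (hγ : 0 < γ) (hγβ : γ ≤ β / 2)
    (φ : ℝ → EuclideanSpace ℝ (Fin n)) (hφ : ContDiff ℝ 1 φ)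
    (θs : EuclideanSpace ℝ (Fin n))
    (θ ϑ : ℝ → EuclideanSpace ℝ (Fin n))
    (Nt : ℝ → ℝ) (hN : ∀ t, Nt t = 1 + ‖φ t‖ ^ 2)
    (e : ℝ → ℝ) (he : ∀ t, e t = ⟪θ t - θs, φ t⟫)
    (hϑode : ∀ t, HasDerivAt ϑ (-((γ / Nt t) • (e t • φ t))) t)
    (hθode : ∀ t, HasDerivAt θ (-(β • (θ t - ϑ t))) t)
    (V : ℝ → ℝ)
    (hV : ∀ t, V t = (1 / γ) * ‖ϑ t - θs‖ ^ 2 + (1 / γ) * ‖θ t - ϑ t‖ ^ 2) :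
    ∀ t, deriv V t ≤ -(e t ^ 2 / Nt t) ∧ -(e t ^ 2 / Nt t) ≤ 0 := by
  intro t
  have hNpos : 0 < Nt t := by rw [hN t]; positivity
  refine ⟨?_, by apply neg_nonpos_of_nonneg; positivity⟩
  set v : EuclideanSpace ℝ (Fin n) := -((γ / Nt t) • (e t • φ t)) with hv
  set d : EuclideanSpace ℝ (Fin n) := θ t - ϑ t with hd
  set x : EuclideanSpace ℝ (Fin n) := ϑ t - θs with hx
  have h1 : HasDerivAt (fun s => ϑ s - θs) v t := (hϑode t).sub_const θs
  have h2 : HasDerivAt (fun s => θ s - ϑ s) (-(β • d) - v) t :=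
    (hθode t).sub (hϑode t)
  have hA := h1.inner ℝ h1
  have hB := h2.inner ℝ h2
  have hVeq : V = fun s => (1 / γ) * ⟪ϑ s - θs, ϑ s - θs⟫
      + (1 / γ) * ⟪θ s - ϑ s, θ s - ϑ s⟫ := by
    funext s
    rw [hV s, real_inner_self_eq_norm_sq, real_inner_self_eq_norm_sq]
  have hD : HasDerivAt V
      ((1 / γ) * (⟪x, v⟫ + ⟪v, x⟫)
        + (1 / γ) * (⟪d, -(β • d) - v⟫ + ⟪-(β • d) - v, d⟫)) t := by
    rw [hVeq]
    exact (hA.const_mul (1 / γ)).add (hB.const_mul (1 / γ))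
  rw [hD.deriv]
  have hexp : e t = ⟪x, φ t⟫ + ⟪d, φ t⟫ := by
    rw [he t, ← inner_add_left]
    congr 1
    simp only [hx, hd]
    abel
  have hq : ⟪x, φ t⟫ = e t - ⟪d, φ t⟫ := by rw [hexp]; ring
  have hAval : (1 / γ) * (⟪x, v⟫ + ⟪v, x⟫)
        + (1 / γ) * (⟪d, -(β • d) - v⟫ + ⟪-(β • d) - v, d⟫)
      = (-(2 * e t ^ 2) + 4 * e t * ⟪d, φ t⟫) / Nt t - (2 * β / γ) * ‖d‖ ^ 2 := by
    simp only [hv, inner_neg_left, inner_neg_right, inner_sub_left, inner_sub_right,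
      real_inner_smul_left, real_inner_smul_right, real_inner_self_eq_norm_sq]
    have hc1 : (⟪φ t, x⟫ : ℝ) = ⟪x, φ t⟫ := real_inner_comm _ _
    have hc2 : (⟪φ t, d⟫ : ℝ) = ⟪d, φ t⟫ := real_inner_comm _ _
    rw [hc1, hc2, hq]
    field_simp
    ring
  rw [hAval]
  -- now the algebraic inequality
  set p : ℝ := ⟪d, φ t⟫ with hp
  have hcs : |p| ≤ ‖d‖ * ‖φ t‖ := abs_real_inner_le_norm d (φ t)
  have hcs2 : p ^ 2 ≤ ‖d‖ ^ 2 * ‖φ t‖ ^ 2 := by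
    have h := mul_self_le_mul_self (abs_nonneg p) hcs
    calc p ^ 2 = |p| * |p| := by rw [← sq_abs]; ring
    _ ≤ (‖d‖ * ‖φ t‖) * (‖d‖ * ‖φ t‖) := h
    _ = ‖d‖ ^ 2 * ‖φ t‖ ^ 2 := by ring
  have hφN : ‖φ t‖ ^ 2 ≤ Nt t := by rw [hN t]; linarith
  have hm : 4 ≤ 2 * β / γ := by
    rw [le_div_iff₀ hγ]; linarith
  have hnum : -(2 * e t ^ 2) + 4 * e t * p - (2 * β / γ) * ‖d‖ ^ 2 * Nt t
      ≤ -(e t ^ 2) := by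
    have hdN : (0:ℝ) ≤ ‖d‖ ^ 2 * Nt t := by positivity
    have h4 : 4 * (‖d‖ ^ 2 * Nt t) ≤ (2 * β / γ) * (‖d‖ ^ 2 * Nt t) :=
      mul_le_mul_of_nonneg_right hm hdN
    nlinarith [sq_nonneg (e t - 2 * p), hcs2, sq_nonneg ‖d‖,
      mul_le_mul_of_nonneg_left hφN (by positivity : (0:ℝ) ≤ ‖d‖ ^ 2)]
  calc (-(2 * e t ^ 2) + 4 * e t * p) / Nt t - (2 * β / γ) * ‖d‖ ^ 2
      = (-(2 * e t ^ 2) + 4 * e t * p - (2 * β / γ) * ‖d‖ ^ 2 * Nt t) / Nt t := by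
        field_simp
    _ ≤ (-(e t ^ 2)) / Nt t := by
        gcongr
    _ = -(e t ^ 2 / Nt t) := by rw [neg_div]
end

section
/- Nesterov acceleration for smooth convex functions: let f: ℝ^N → ℝ be convex, differentiable, L̄-smooth with minimizer θ*. With θ_0 = ν_0, updates θ_{k+1} = ν_k − (1/L̄)∇f(ν_k), ν_{k+1} = (1 + β̄_k)θ_{k+1} − β̄_k θ_k, where β̄_k = (ι_k − 1)/ι_{k+1} and ι_{-1} = 0, ι_{k+1} = (1+√(1+4ι_k²))/2, one has f(θ_k) − f(θ*) ≤ 2L̄‖θ_0 − θ*‖²/(k−1)² for all k ≥ 2. -/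
set_option maxHeartbeats 1000000


open scoped RealInnerProductSpace

/-- Nesterov acceleration for smooth convex functions:
`f(θ_k) - f(θ*) ≤ 2L̄‖θ_0-θ*‖²/(k-1)²` for all `k ≥ 2`. Here `ι 0` is the paper's
`ι_{-1} = 0` and `β̄_k = (ι_k - 1)/ι_{k+1}` reads `(ι (k+1) - 1)/ι (k+2)`. -/
theorem stmt12 (n : ℕ) (f : EuclideanSpace ℝ (Fin n) → ℝ)
    (g : EuclideanSpace ℝ (Fin n) → EuclideanSpace ℝ (Fin n))
    (hg : ∀ x, HasGradientAt f (g x) x)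
    (L : ℝ) (hL : 0 < L)
    (hconv : ∀ x y, f x + ⟪g x, y - x⟫ ≤ f y)
    (hsmooth : ∀ x y, f y ≤ f x + ⟪g x, y - x⟫ + (L / 2) * ‖y - x‖ ^ 2)
    (θs : EuclideanSpace ℝ (Fin n)) (hmin : ∀ x, f θs ≤ f x)
    (ι : ℕ → ℝ) (hι0 : ι 0 = 0)
    (hιrec : ∀ k, ι (k + 1) = (1 + Real.sqrt (1 + 4 * ι k ^ 2)) / 2)
    (θ ν : ℕ → EuclideanSpace ℝ (Fin n)) (h0 : ν 0 = θ 0)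
    (hθ : ∀ k, θ (k + 1) = ν k - (1 / L) • g (ν k))
    (hν : ∀ k, ν (k + 1) = (1 + (ι (k + 1) - 1) / ι (k + 2)) • θ (k + 1)
      - ((ι (k + 1) - 1) / ι (k + 2)) • θ k) :
    ∀ k : ℕ, 2 ≤ k → f (θ k) - f θs ≤ 2 * L * ‖θ 0 - θs‖ ^ 2 / ((k : ℝ) - 1) ^ 2 := by
  -- basic facts about ι
  have hι1 : ∀ k, 1 ≤ ι (k + 1) := by
    intro k
    have h1 : Real.sqrt 1 ≤ Real.sqrt (1 + 4 * ι k ^ 2) :=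
      Real.sqrt_le_sqrt (by nlinarith [sq_nonneg (ι k)])
    rw [Real.sqrt_one] at h1
    rw [hιrec k]; linarith
  have hιnn : ∀ k, 0 ≤ ι k := by
    intro k
    cases k with
    | zero => simp [hι0]
    | succ m => linarith [hι1 m]
  have hιkey : ∀ k, ι (k + 1) ^ 2 - ι (k + 1) = ι k ^ 2 := by
    intro k
    have hs : Real.sqrt (1 + 4 * ι k ^ 2) ^ 2 = 1 + 4 * ι k ^ 2 :=
      Real.sq_sqrt (by positivity)
    rw [hιrec k]; nlinarith [hs]
  have hιgrow : ∀ k : ℕ, ((k : ℝ) - 1) / 2 ≤ ι k := by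
    intro k
    induction k with
    | zero => simp [hι0]; norm_num
    | succ m ih =>
      have h2 : 2 * ι m ≤ Real.sqrt (1 + 4 * ι m ^ 2) := by
        have := Real.sqrt_sq (by linarith [hιnn m] : (0:ℝ) ≤ 2 * ι m)
        rw [← this]
        exact Real.sqrt_le_sqrt (by nlinarith)
      rw [hιrec m]; push_cast; linarith
  -- auxiliary sequence
  set u : ℕ → EuclideanSpace ℝ (Fin n) :=
    fun j => ι (j + 1) • ν j - (ι (j + 1) - 1) • θ j with hu
  -- one-step estimate
  have hstep : ∀ k, ι (k + 1) ^ 2 * (f (θ (k + 1)) - f θs)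
      + L / 2 * ‖u (k + 1) - θs‖ ^ 2
      ≤ ι k ^ 2 * (f (θ k) - f θs) + L / 2 * ‖u k - θs‖ ^ 2 := by
    intro k
    set A := g (ν k) with hA
    set t := ι (k + 1) with ht
    have htpos : 1 ≤ t := hι1 k
    have hθd : θ (k + 1) - ν k = -((1 / L) • A) := by
      rw [hθ k]; abel
    -- descent lemma
    have hdesc : f (θ (k + 1)) ≤ f (ν k) - 1 / (2 * L) * ‖A‖ ^ 2 := by
      have h1 := hsmooth (ν k) (θ (k + 1))
      rw [hθd] at h1
      have hi : ⟪A, -((1 / L) • A)⟫ = -(1 / L) * ‖A‖ ^ 2 := by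
        rw [inner_neg_right, real_inner_smul_right, real_inner_self_eq_norm_sq]
        ring
      have hn : ‖-((1 / L) • A)‖ ^ 2 = (1 / L) ^ 2 * ‖A‖ ^ 2 := by
        rw [norm_neg, norm_smul, mul_pow, Real.norm_eq_abs, sq_abs]
      rw [hi, hn] at h1
      have hc : L / 2 * ((1 / L) ^ 2 * ‖A‖ ^ 2) = 1 / (2 * L) * ‖A‖ ^ 2 := by
        field_simp
      rw [hc] at h1
      have : -(1 / L) * ‖A‖ ^ 2 + 1 / (2 * L) * ‖A‖ ^ 2 = -(1 / (2 * L) * ‖A‖ ^ 2) := by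
        field_simp
        ring
      linarith
    -- key inequality against any point x
    have hkey : ∀ x, f (θ (k + 1)) ≤ f x + ⟪A, ν k - x⟫ - 1 / (2 * L) * ‖A‖ ^ 2 := by
      intro x
      have h2 := hconv (ν k) x
      have h3 : ⟪A, x - ν k⟫ = -⟪A, ν k - x⟫ := by
        rw [← inner_neg_right]; congr 1; abel
      rw [h3] at h2
      linarith
    -- scalar abbreviations
    set a := ⟪A, ν k⟫ with ha
    set b := ⟪A, θ k⟫ with hb
    set c := ⟪A, θs⟫ with hc
    have I1 : f (θ (k + 1)) ≤ f (θ k) + (a - b) - 1 / (2 * L) * ‖A‖ ^ 2 := by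
      have := hkey (θ k)
      rwa [inner_sub_right] at this
    have I2 : f (θ (k + 1)) ≤ f θs + (a - c) - 1 / (2 * L) * ‖A‖ ^ 2 := by
      have := hkey θs
      rwa [inner_sub_right] at this
    -- vector identity : u (k+1) = u k - (t/L) • A
    have hs2 : (1:ℝ) ≤ ι (k + 2) := hι1 (k + 1)
    have hs2' : ι (k + 2) ≠ 0 := by linarith
    have huk : u (k + 1) = u k - (t / L) • A := by
      show ι (k + 2) • ν (k + 1) - (ι (k + 2) - 1) • θ (k + 1)
        = (t • ν k - (t - 1) • θ k) - (t / L) • A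
      rw [hν k, hθ k, ht]
      match_scalars <;> field_simp <;> ring
    -- expand the norm
    have hipA : ⟪A, u k - θs⟫ = t * a - (t - 1) * b - c := by
      show ⟪A, (t • ν k - (t - 1) • θ k) - θs⟫ = _
      rw [inner_sub_right, inner_sub_right, real_inner_smul_right, real_inner_smul_right]
    have hexp : ‖u (k + 1) - θs‖ ^ 2
        = ‖u k - θs‖ ^ 2 - 2 * (t / L) * (t * a - (t - 1) * b - c)
          + (t / L) ^ 2 * ‖A‖ ^ 2 := by
      have h4 : u (k + 1) - θs = (u k - θs) - (t / L) • A := by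
        rw [huk]; abel
      rw [h4, norm_sub_sq_real, real_inner_smul_right, norm_smul, mul_pow,
        Real.norm_eq_abs, sq_abs]
      rw [real_inner_comm] at hipA
      rw [hipA]
      ring
    -- combine
    have hkk : t ^ 2 - t = ι k ^ 2 := hιkey k
    have hL0 : L ≠ 0 := ne_of_gt hL
    rw [hexp, ← hkk]
    have hG : L / 2 * (‖u k - θs‖ ^ 2 - 2 * (t / L) * (t * a - (t - 1) * b - c)
        + (t / L) ^ 2 * ‖A‖ ^ 2)
        = L / 2 * ‖u k - θs‖ ^ 2 - t * (t * a - (t - 1) * b - c)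
          + t ^ 2 * (1 / (2 * L) * ‖A‖ ^ 2) := by
      field_simp
    rw [hG]
    have e1 : t * (t - 1) * f (θ (k + 1))
        ≤ t * (t - 1) * (f (θ k) + (a - b) - 1 / (2 * L) * ‖A‖ ^ 2) :=
      mul_le_mul_of_nonneg_left I1 (by nlinarith)
    have e2 : t * f (θ (k + 1))
        ≤ t * (f θs + (a - c) - 1 / (2 * L) * ‖A‖ ^ 2) :=
      mul_le_mul_of_nonneg_left I2 (by linarith)
    nlinarith [e1, e2]
  -- telescoping
  have hmain : ∀ k, ι k ^ 2 * (f (θ k) - f θs) + L / 2 * ‖u k - θs‖ ^ 2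
      ≤ L / 2 * ‖θ 0 - θs‖ ^ 2 := by
    intro k
    induction k with
    | zero =>
      have hι1' : ι 1 = 1 := by
        rw [hιrec 0, hι0]; norm_num
      have hu0 : u 0 = θ 0 := by
        show ι 1 • ν 0 - (ι 1 - 1) • θ 0 = θ 0
        rw [hι1', h0]; simp
      rw [hι0, hu0]; norm_num
    | succ m ih => exact le_trans (hstep m) ih
  -- conclusion
  intro k hk
  have hδ : 0 ≤ f (θ k) - f θs := by linarith [hmin (θ k)]
  have hιk : ((k : ℝ) - 1) / 2 ≤ ι k := hιgrow k
  have hk1 : (2 : ℝ) ≤ (k : ℝ) := by exact_mod_cast hk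
  have hkpos : (0 : ℝ) < (k : ℝ) - 1 := by linarith
  have h1 : ι k ^ 2 * (f (θ k) - f θs) ≤ L / 2 * ‖θ 0 - θs‖ ^ 2 := by
    have := hmain k
    nlinarith [sq_nonneg ‖u k - θs‖]
  have h2 : (((k : ℝ) - 1) / 2) ^ 2 * (f (θ k) - f θs) ≤ L / 2 * ‖θ 0 - θs‖ ^ 2 := by
    have hle : (((k : ℝ) - 1) / 2) ^ 2 ≤ ι k ^ 2 := by
      apply sq_le_sq' <;> nlinarith [hιnn k]
    nlinarith [mul_le_mul_of_nonneg_right hle hδ]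
  rw [le_div_iff₀ (by positivity : (0:ℝ) < ((k : ℝ) - 1) ^ 2)]
  nlinarith [h2]
end

section
/- Nesterov acceleration for smooth strongly convex functions: let f be μ-strongly convex and L̄-smooth with minimizer θ*, κ = L̄/μ ≥ 1. With θ_0 = ν_0 and iterates θ_{k+1} = ν_k − (1/L̄)∇f(ν_k), ν_{k+1} = (1 + β̄)θ_{k+1} − β̄θ_k, β̄ = (√κ − 1)/(√κ + 1), one has f(θ_k) − f(θ*) ≤ ((L̄+μ)/2)‖θ_0 − θ*‖² (1 − 1/√κ)^k ≤ ((L̄+μ)/2)‖θ_0 − θ*‖² exp(−k/√κ). -/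
open scoped RealInnerProductSpace

lemma expand3 {n : ℕ} (a b c : EuclideanSpace ℝ (Fin n)) (p r t : ℝ) :
    ‖p•a + r•b + t•c‖^2 = p^2*‖a‖^2 + r^2*‖b‖^2 + t^2*‖c‖^2
      + 2*p*r*⟪a,b⟫ + 2*p*t*⟪a,c⟫ + 2*r*t*⟪b,c⟫ := by
  have h : ∀ u : EuclideanSpace ℝ (Fin n), ‖u‖^2 = ⟪u,u⟫ :=
    fun u => (real_inner_self_eq_norm_sq u).symm
  rw [h, h, h, h]
  simp only [inner_add_left, inner_add_right, real_inner_smul_left, real_inner_smul_right]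
  rw [real_inner_comm b a, real_inner_comm c a, real_inner_comm c b]
  ring

set_option maxHeartbeats 1000000

lemma nesterov_step {n : ℕ} (μ L q : ℝ) (hL : 0 < L) (hq0 : 0 < q) (hq1 : q ≤ 1)
    (hLq : L * q^2 = μ)
    (x y x' v v' θs gk : EuclideanSpace ℝ (Fin n))
    (hx' : x' = y - (1/L) • gk)
    (hv : v = y + (1/q) • (y - x))
    (hv' : v' = x' + ((1-q)/q) • (x' - x))
    (fx fy fx' fs : ℝ)
    (h1 : fx' ≤ fy + ⟪gk, x' - y⟫ + (L/2)*‖x' - y‖^2)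
    (h2 : fy + ⟪gk, θs - y⟫ + (μ/2)*‖θs - y‖^2 ≤ fs)
    (h3 : fy + ⟪gk, x - y⟫ + (μ/2)*‖x - y‖^2 ≤ fx) :
    fx' - fs + (μ/2)*‖v' - θs‖^2 ≤ (1-q)*(fx - fs + (μ/2)*‖v - θs‖^2) := by
  subst hLq
  have hq' : q ≠ 0 := hq0.ne'
  have hL' : L ≠ 0 := hL.ne'
  -- vector identities
  have hxy : x' - y = (-(1/L)) • gk := by
    rw [hx']; module
  have hv2 : v - θs = (-(1/q)) • (x - y) + (-1 : ℝ) • (θs - y) + (0:ℝ) • gk := by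
    rw [hv]; match_scalars <;> field_simp <;> ring_nf
  have hv'2 : v' - θs = (-((1-q)/q)) • (x - y) + (-1 : ℝ) • (θs - y) + (-(1/(q*L))) • gk := by
    rw [hv', hx']; match_scalars <;> field_simp <;> ring_nf
  -- scalar abbreviations
  set A := ‖x - y‖^2 with hA
  set B := ‖θs - y‖^2 with hB
  set G := ‖gk‖^2 with hG
  set P := ⟪x - y, θs - y⟫ with hP
  set S := ⟪gk, x - y⟫ with hS
  set T := ⟪gk, θs - y⟫ with hT
  have hAn : 0 ≤ A := by positivity
  have h1' : fx' ≤ fy - (1/(2*L))*G := by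
    have e1 : ⟪gk, x' - y⟫ = -(1/L)*G := by
      rw [hxy, real_inner_smul_right, real_inner_self_eq_norm_sq]
    have e2 : ‖x' - y‖^2 = (1/L)^2 * G := by
      rw [hxy, norm_smul, Real.norm_eq_abs, mul_pow, sq_abs]; ring
    have e3 : (L/2)*((1/L)^2*G) - (1/L)*G = -(1/(2*L))*G := by
      field_simp; ring
    rw [e1, e2] at h1
    linarith
  have eV : ‖v - θs‖^2 = (1/q)^2*A + B + 2*(1/q)*P := by
    rw [hv2, expand3]
    simp only [← hA, ← hB, ← hP]
    ring
  have eV' : ‖v' - θs‖^2 = ((1-q)/q)^2*A + B + (1/(q*L))^2*G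
      + 2*((1-q)/q)*P + 2*((1-q)/q)*(1/(q*L))*S + 2*(1/(q*L))*T := by
    rw [hv'2, expand3, real_inner_comm gk (x-y), real_inner_comm gk (θs-y)]
    simp only [← hA, ← hB, ← hG, ← hP, ← hS, ← hT]
    ring
  rw [eV, eV']
  -- key scalar inequality
  have h4 : 0 ≤ (1-q) * (fx - S - (L*q^2/2)*A - fy) :=
    mul_nonneg (by linarith) (by linarith)
  have h5 : 0 ≤ q * (fs - T - (L*q^2/2)*B - fy) :=
    mul_nonneg hq0.le (by linarith)
  have slack : 0 ≤ (L*q^2/2)*((1-q)*(1+q)/q)*A := by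
    have : 0 ≤ (1-q)*(1+q)/q := by
      apply div_nonneg (mul_nonneg (by linarith) (by linarith)) hq0.le
    positivity
  have hid : (1-q)*(L*q^2/2)*((1/q)^2*A + B + 2*(1/q)*P) + (1-q)*S + (1-q)*(L*q^2/2)*A
      + q*T + q*(L*q^2/2)*B + (1/(2*L))*G
      - (L*q^2/2)*(((1-q)/q)^2*A + B + (1/(q*L))^2*G
        + 2*((1-q)/q)*P + 2*((1-q)/q)*(1/(q*L))*S + 2*(1/(q*L))*T)
      = (L*q^2/2)*((1-q)*(1+q)/q)*A := by
    field_simp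
    ring
  linarith [h1', h4, h5, slack, hid]

/-- Nesterov acceleration for smooth strongly convex functions:
`f(θ_k) - f(θ*) ≤ ((L̄+μ)/2)‖θ_0-θ*‖²(1-1/√κ)^k ≤ ((L̄+μ)/2)‖θ_0-θ*‖² exp(-k/√κ)`. -/
theorem stmt13 (n : ℕ) (f : EuclideanSpace ℝ (Fin n) → ℝ)
    (g : EuclideanSpace ℝ (Fin n) → EuclideanSpace ℝ (Fin n))
    (hg : ∀ x, HasGradientAt f (g x) x)
    (μ L : ℝ) (hμ : 0 < μ) (hμL : μ ≤ L)
    (hsc : ∀ x y, f x + ⟪g x, y - x⟫ + (μ / 2) * ‖y - x‖ ^ 2 ≤ f y)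
    (hsmooth : ∀ x y, f y ≤ f x + ⟪g x, y - x⟫ + (L / 2) * ‖y - x‖ ^ 2)
    (θs : EuclideanSpace ℝ (Fin n)) (hmin : ∀ x, f θs ≤ f x)
    (κ βbar : ℝ) (hκ : κ = L / μ)
    (hβbar : βbar = (Real.sqrt κ - 1) / (Real.sqrt κ + 1))
    (θ ν : ℕ → EuclideanSpace ℝ (Fin n)) (h0 : ν 0 = θ 0)
    (hθ : ∀ k, θ (k + 1) = ν k - (1 / L) • g (ν k))
    (hν : ∀ k, ν (k + 1) = (1 + βbar) • θ (k + 1) - βbar • θ k) :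
    ∀ k : ℕ, f (θ k) - f θs ≤ ((L + μ) / 2) * ‖θ 0 - θs‖ ^ 2 * (1 - 1 / Real.sqrt κ) ^ k ∧
      ((L + μ) / 2) * ‖θ 0 - θs‖ ^ 2 * (1 - 1 / Real.sqrt κ) ^ k ≤
        ((L + μ) / 2) * ‖θ 0 - θs‖ ^ 2 * Real.exp (-((k : ℝ) / Real.sqrt κ)) := by
  have hL : 0 < L := lt_of_lt_of_le hμ hμL
  have hκ1 : 1 ≤ κ := by rw [hκ]; exact (one_le_div hμ).mpr hμL
  set s := Real.sqrt κ with hs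
  have hs1 : 1 ≤ s := by
    rw [hs]
    calc (1:ℝ) = Real.sqrt 1 := Real.sqrt_one.symm
      _ ≤ Real.sqrt κ := Real.sqrt_le_sqrt hκ1
  have hs0 : 0 < s := lt_of_lt_of_le one_pos hs1
  set q : ℝ := 1 / s with hqdef
  have hq0 : 0 < q := by positivity
  have hq1 : q ≤ 1 := (div_le_one hs0).mpr hs1
  have hsq : s ^ 2 = κ := Real.sq_sqrt (by linarith)
  have hLq : L * q ^ 2 = μ := by
    have hκ0 : κ ≠ 0 := by positivity
    have : q ^ 2 = μ / L := by
      rw [hqdef, div_pow, one_pow, hsq, hκ, one_div_div]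
    rw [this]; field_simp
  have hβq : βbar = (1 - q) / (1 + q) := by
    rw [hβbar, hqdef]
    rw [div_eq_div_iff (by linarith) (by positivity)]
    field_simp
  -- zero gradient at the minimizer
  have hgs : g θs = 0 := by
    have h1 := hsmooth θs (θs - (1/L) • g θs)
    have h2 := hmin (θs - (1/L) • g θs)
    have e0 : (θs - (1/L) • g θs) - θs = (-(1/L)) • g θs := by module
    rw [e0, real_inner_smul_right, real_inner_self_eq_norm_sq, norm_smul,
      Real.norm_eq_abs, mul_pow, sq_abs] at h1
    have e3 : (L/2)*((1/L)^2*‖g θs‖^2) - (1/L)*‖g θs‖^2 = -(1/(2*L))*‖g θs‖^2 := by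
      field_simp; ring
    have hG : ‖g θs‖ ^ 2 ≤ 0 := by
      have hLpos : 0 < 1/(2*L) := by positivity
      nlinarith [h1, h2]
    have : ‖g θs‖ = 0 := by nlinarith [norm_nonneg (g θs)]
    exact norm_eq_zero.mp this
  -- Lyapunov function
  set V : ℕ → ℝ := fun k =>
    f (θ k) - f θs + (μ/2) * ‖(ν k + (1/q) • (ν k - θ k)) - θs‖^2 with hV
  have hstep : ∀ k, V (k+1) ≤ (1-q) * V k := by
    intro k
    refine nesterov_step μ L q hL hq0 hq1 hLq (θ k) (ν k) (θ (k+1))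
      (ν k + (1/q) • (ν k - θ k)) (ν (k+1) + (1/q) • (ν (k+1) - θ (k+1))) θs (g (ν k))
      (hθ k) rfl ?_ (f (θ k)) (f (ν k)) (f (θ (k+1))) (f θs)
      (hsmooth (ν k) (θ (k+1))) (hsc (ν k) θs) (hsc (ν k) (θ k))
    rw [hν k, hβq]
    have h1q : (1:ℝ) + q ≠ 0 := by positivity
    match_scalars <;> field_simp <;> ring_nf
  have hVnn : ∀ k, f (θ k) - f θs ≤ V k := by
    intro k
    have : 0 ≤ (μ/2) * ‖(ν k + (1/q) • (ν k - θ k)) - θs‖^2 := by positivity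
    simp only [hV]; linarith
  have hV0 : V 0 ≤ ((L + μ) / 2) * ‖θ 0 - θs‖ ^ 2 := by
    have e0 : (ν 0 + (1/q) • (ν 0 - θ 0)) - θs = θ 0 - θs := by
      rw [h0]; module
    have h1 := hsmooth θs (θ 0)
    rw [hgs] at h1
    simp only [inner_zero_left] at h1
    simp only [hV, e0]
    linarith
  have hq1' : (0:ℝ) ≤ 1 - q := by linarith
  have hiter : ∀ k, V k ≤ (1-q)^k * V 0 := by
    intro k
    induction k with
    | zero => simp
    | succ m ih =>
      calc V (m+1) ≤ (1-q) * V m := hstep m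
        _ ≤ (1-q) * ((1-q)^m * V 0) := mul_le_mul_of_nonneg_left ih hq1'
        _ = (1-q)^(m+1) * V 0 := by ring
  intro k
  have hpw : (0:ℝ) ≤ (1-q)^k := pow_nonneg hq1' k
  have hC : (0:ℝ) ≤ ((L + μ) / 2) * ‖θ 0 - θs‖ ^ 2 := by positivity
  constructor
  · have h1 : f (θ k) - f θs ≤ (1-q)^k * V 0 := le_trans (hVnn k) (hiter k)
    have h2 : (1-q)^k * V 0 ≤ (1-q)^k * (((L + μ) / 2) * ‖θ 0 - θs‖ ^ 2) :=
      mul_le_mul_of_nonneg_left hV0 hpw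
    calc f (θ k) - f θs ≤ (1-q)^k * (((L + μ) / 2) * ‖θ 0 - θs‖ ^ 2) := le_trans h1 h2
      _ = ((L + μ) / 2) * ‖θ 0 - θs‖ ^ 2 * (1 - 1/s) ^ k := by rw [hqdef]; ring
  · have hexp : (1-q)^k ≤ Real.exp (-((k:ℝ)/s)) := by
      have h1 : 1 - q ≤ Real.exp (-q) := by
        have := Real.add_one_le_exp (-q)
        linarith
      have h2 : (1-q)^k ≤ (Real.exp (-q))^k := pow_le_pow_left₀ hq1' h1 k
      have h3 : (Real.exp (-q))^k = Real.exp (-((k:ℝ)/s)) := by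
        rw [← Real.exp_nat_mul, hqdef]
        congr 1
        field_simp
      rw [← h3]; exact h2
    have := mul_le_mul_of_nonneg_left hexp hC
    calc ((L + μ) / 2) * ‖θ 0 - θs‖ ^ 2 * (1 - 1/s) ^ k
        = ((L + μ) / 2) * ‖θ 0 - θs‖ ^ 2 * (1-q)^k := by rw [hqdef]
      _ ≤ ((L + μ) / 2) * ‖θ 0 - θs‖ ^ 2 * Real.exp (-((k:ℝ)/s)) := by
          exact mul_le_mul_of_nonneg_left hexp hC
end

section
/- Regularization rate lemma: fix ε > 0, θ₀, θ* ∈ ℝ^N, a scalar N ≥ 1, and let L(θ) = (1/2)‖φᵀθ − y‖² with L(θ*) = 0 the minimum. Choose Ψ ≥ max{1, N‖θ₀ − θ*‖²}, μ = ε/Ψ, L̄ = 1 + μ, κ = L̄/μ = 1 + Ψ/ε, and suppose the iterates θ_k satisfy f(θ_k) − f(θ*_ε) ≤ ((L̄+μ)/2)‖θ₀ − θ*_ε‖² exp(−k/√κ) for the regularized objective f(θ) = L(θ)/N + (μ/2)‖θ − θ₀‖², where θ*_ε minimizes f. Then whenever k ≥ ⌈√(1 + Ψ/ε) · log(2 +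 Ψ/ε)⌉, it holds that L(θ_k) − L(θ*) ≤ ε. -/
open scoped RealInnerProductSpace

/-- Regularization rate lemma (Lemma 2): if the iterates satisfy the accelerated rate for the
regularized objective `f = L/𝒩 + (μ/2)‖·-θ₀‖²` with `μ = ε/Ψ`, then after
`k ≥ √(1+Ψ/ε)·log(2+Ψ/ε)` iterations `L(θ_k) - L(θ*) ≤ ε`. -/
theorem stmt14 (n : ℕ) (ε : ℝ) (hε : 0 < ε)
    (θ0 θs : EuclideanSpace ℝ (Fin n)) (Nn : ℝ) (hNn : 1 ≤ Nn)
    (φ : EuclideanSpace ℝ (Fin n)) (y : ℝ)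
    (Lf : EuclideanSpace ℝ (Fin n) → ℝ)
    (hLf : ∀ θ, Lf θ = (1 / 2) * (⟪φ, θ⟫ - y) ^ 2)
    (hLmin : Lf θs = 0)
    (Ψ : ℝ) (hΨ : max 1 (Nn * ‖θ0 - θs‖ ^ 2) ≤ Ψ)
    (μ Lbar κ : ℝ) (hμ : μ = ε / Ψ) (hLbar : Lbar = 1 + μ) (hκ : κ = Lbar / μ)
    (fr : EuclideanSpace ℝ (Fin n) → ℝ)
    (hfr : ∀ θ, fr θ = Lf θ / Nn + (μ / 2) * ‖θ - θ0‖ ^ 2)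
    (θsε : EuclideanSpace ℝ (Fin n)) (hθsε : ∀ θ, fr θsε ≤ fr θ)
    (θ : ℕ → EuclideanSpace ℝ (Fin n))
    (hbound : ∀ k : ℕ, fr (θ k) - fr θsε ≤
      ((Lbar + μ) / 2) * ‖θ0 - θsε‖ ^ 2 * Real.exp (-((k : ℝ) / Real.sqrt κ))) :
    ∀ k : ℕ, Real.sqrt (1 + Ψ / ε) * Real.log (2 + Ψ / ε) ≤ (k : ℝ) →
      Lf (θ k) - Lf θs ≤ ε := by
  intro k hk
  have hΨ1 : (1:ℝ) ≤ Ψ := le_trans (le_max_left _ _) hΨ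
  have hΨpos : 0 < Ψ := lt_of_lt_of_le one_pos hΨ1
  have hμpos : 0 < μ := by rw [hμ]; positivity
  have hNpos : 0 < Nn := lt_of_lt_of_le one_pos hNn
  have hLnonneg : ∀ t, 0 ≤ Lf t := fun t => by rw [hLf]; positivity
  have hκval : κ = 1 + Ψ / ε := by
    rw [hκ, hLbar, hμ]
    field_simp
    ring
  have hNΨ : Nn * ‖θ0 - θs‖ ^ 2 ≤ Ψ := le_trans (le_max_right _ _) hΨ
  have hμΨ : μ * Ψ = ε := by rw [hμ]; field_simp
  -- norm bound
  have hnorm : ‖θsε - θ0‖ ^ 2 ≤ ‖θs - θ0‖ ^ 2 := by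
    have h := hθsε θs
    rw [hfr, hfr, hLmin, zero_div, zero_add] at h
    have hd : 0 ≤ Lf θsε / Nn := div_nonneg (hLnonneg _) hNpos.le
    have h5 : μ / 2 * ‖θsε - θ0‖ ^ 2 ≤ μ / 2 * ‖θs - θ0‖ ^ 2 := by linarith
    exact le_of_mul_le_mul_left h5 (by positivity)
  have hnorm0 : Nn * ‖θ0 - θsε‖ ^ 2 ≤ Ψ := by
    rw [norm_sub_rev θ0 θsε]
    refine le_trans ?_ hNΨ
    rw [norm_sub_rev θ0 θs]
    exact mul_le_mul_of_nonneg_left hnorm hNpos.le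
  -- exponential bound
  set E := Real.exp (-((k : ℝ) / Real.sqrt κ)) with hEdef
  have hEpos : 0 < E := Real.exp_pos _
  have hE : E ≤ ε / (2 * ε + Ψ) := by
    have h2 : (0:ℝ) < 2 + Ψ / ε := by positivity
    have hsqpos : 0 < Real.sqrt (1 + Ψ / ε) := Real.sqrt_pos.mpr (by positivity)
    have hk' : Real.log (2 + Ψ / ε) ≤ (k : ℝ) / Real.sqrt κ := by
      rw [hκval, le_div_iff₀ hsqpos]
      calc Real.log (2 + Ψ/ε) * Real.sqrt (1 + Ψ/ε)
          = Real.sqrt (1 + Ψ/ε) * Real.log (2 + Ψ/ε) := by ring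
        _ ≤ k := hk
    have hle : E ≤ Real.exp (-(Real.log (2 + Ψ / ε))) :=
      Real.exp_le_exp.mpr (by linarith)
    have heq : Real.exp (-(Real.log (2 + Ψ / ε))) = ε / (2 * ε + Ψ) := by
      rw [Real.exp_neg, Real.exp_log h2]
      rw [eq_div_iff (by positivity : (2 * ε + Ψ) ≠ 0), inv_mul_eq_div,
        div_eq_iff (by positivity : (2 + Ψ / ε) ≠ 0)]
      field_simp
    calc E ≤ Real.exp (-(Real.log (2 + Ψ / ε))) := hle
      _ = ε / (2 * ε + Ψ) := heq
  -- L θk ≤ Nn * fr θk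
  have hfrk : Lf (θ k) ≤ Nn * fr (θ k) := by
    have h0 : 0 ≤ μ / 2 * ‖θ k - θ0‖ ^ 2 := by positivity
    have h1 : Lf (θ k) / Nn ≤ fr (θ k) := by rw [hfr]; linarith
    rw [div_le_iff₀ hNpos] at h1
    calc Lf (θ k) ≤ fr (θ k) * Nn := h1
      _ = Nn * fr (θ k) := mul_comm _ _
  -- Nn * fr θsε ≤ ε/2
  have hfrs : Nn * fr θsε ≤ ε / 2 := by
    have h1 : fr θsε ≤ fr θs := hθsε θs
    have h2 : fr θs = μ / 2 * ‖θs - θ0‖ ^ 2 := by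
      rw [hfr, hLmin, zero_div, zero_add]
    have h4 : Nn * fr θsε ≤ Nn * (μ / 2 * ‖θs - θ0‖ ^ 2) := by
      rw [← h2]; exact mul_le_mul_of_nonneg_left h1 hNpos.le
    have h3 : Nn * fr θsε ≤ μ / 2 * (Nn * ‖θ0 - θs‖ ^ 2) := by
      rw [norm_sub_rev θ0 θs]; linarith
    nlinarith [mul_nonneg hμpos.le (sub_nonneg.mpr hNΨ)]
  -- Nn * (fr θk - fr θsε) ≤ ε/2
  have hdiff : Nn * (fr (θ k) - fr θsε) ≤ ε / 2 := by
    have hb := hbound k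
    have h1 : Nn * (fr (θ k) - fr θsε) ≤ Nn * (((Lbar + μ) / 2) * ‖θ0 - θsε‖ ^ 2 * E) :=
      mul_le_mul_of_nonneg_left hb hNpos.le
    have hLbarμ : Lbar + μ = 1 + 2 * μ := by rw [hLbar]; ring
    have hc : (0:ℝ) ≤ (1 + 2 * μ) / 2 * E := by positivity
    have h2 : Nn * (((Lbar + μ) / 2) * ‖θ0 - θsε‖ ^ 2 * E) ≤ ((1 + 2 * μ) / 2) * Ψ * E := by
      rw [hLbarμ]
      calc Nn * ((1 + 2*μ)/2 * ‖θ0 - θsε‖^2 * E)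
          = (1 + 2*μ)/2 * E * (Nn * ‖θ0 - θsε‖^2) := by ring
        _ ≤ (1 + 2*μ)/2 * E * Ψ := mul_le_mul_of_nonneg_left hnorm0 hc
        _ = (1 + 2*μ)/2 * Ψ * E := by ring
    have h3 : ((1 + 2 * μ) / 2) * Ψ * E = ((Ψ + 2 * ε) / 2) * E := by
      rw [← hμΨ]; ring
    have h4 : ((Ψ + 2 * ε) / 2) * E ≤ ε / 2 := by
      have h5 := mul_le_mul_of_nonneg_left hE
        (by positivity : (0:ℝ) ≤ (Ψ + 2 * ε) / 2)
      have h6 : (Ψ + 2 * ε) / 2 * (ε / (2 * ε + Ψ)) = ε / 2 := by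
        rw [div_mul_div_comm, div_eq_div_iff (by positivity) (by norm_num : (2:ℝ) ≠ 0)]
        ring
      rw [h6] at h5
      linarith
    linarith
  rw [hLmin]
  have hsplit : Nn * fr (θ k) = Nn * (fr (θ k) - fr θsε) + Nn * fr θsε := by ring
  linarith
end

section
/- Closed-form minimizer of Nesterov's hard function: let n ≥ 1, b, c, d > 0, and L(θ) = (a/4){(1/2)[b(θ^{(1)})² + c∑_{i=1}^{n-1}(θ^{(i)} − θ^{(i+1)})² + b(θ^{(n)})²] − dθ^{(1)}} for a > 0. Then the unique minimizer θ* has coordinates θ*^{(i)} = d[((n−i)b + c)/((n−1)b² + 2bc)] for 1 ≤ i ≤ n, and in particular θ* is independent of a. -/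
/-!
Write `Q(θ) = b θ₀² + c ∑ (θᵢ - θᵢ₊₁)² + b θₙ₋₁²`, so that `L(θ) = (a/4)(Q(θ)/2 - d θ₀)`.
The closed-form `θ*` has the constant gap `θ*ᵢ - θ*ᵢ₊₁ = db/Δ`, `Δ = (n-1)b² + 2bc`, and satisfies
the two boundary equations `b θ*₀ + c·db/Δ = d` and `b θ*ₙ₋₁ = c·db/Δ`; together these say that
the gradient of `L` vanishes at `θ*`. Completing the square then gives
`L(θ* + v) = L(θ*) + (a/8) Q(v)`, and `Q` is positive definite when `b, c > 0`.
-/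

open Finset

section PathEnergy

variable {n : ℕ}

def pathEnergy (f : Fin n → ℝ) : ℝ :=
  ∑ i : Fin (n - 1), (f ⟨i, by omega⟩ - f ⟨i + 1, by omega⟩) ^ 2

theorem sum_sub_succ_eq (hn : 0 < n) (f : Fin n → ℝ) :
    ∑ i : Fin (n - 1), (f ⟨i, by omega⟩ - f ⟨i + 1, by omega⟩)
      = f ⟨0, hn⟩ - f ⟨n - 1, Nat.sub_one_lt_of_lt hn⟩ := by
  let g : ℕ → ℝ := fun k => if h : k < n then f ⟨k, h⟩ else 0
  have hg : ∀ k (hk : k < n), f ⟨k, hk⟩ = g k := fun k hk => by simp [g, hk]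
  simp only [hg]
  rw [Fin.sum_univ_eq_sum_range (fun k => g k - g (k + 1)), sum_range_sub']

theorem pathEnergy_nonneg (f : Fin n → ℝ) : 0 ≤ pathEnergy f :=
  sum_nonneg fun _ _ => sq_nonneg _

theorem eq_zero_of_pathEnergy_eq_zero (hn : 0 < n) {f : Fin n → ℝ} (hE : pathEnergy f = 0)
    (h0 : f ⟨0, hn⟩ = 0) : f = 0 := by
  have hstep : ∀ i : Fin (n - 1), f ⟨i, by omega⟩ = f ⟨i + 1, by omega⟩ := fun i =>
    sub_eq_zero.mp <| pow_eq_zero_iff two_ne_zero |>.mp <|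
      (sum_eq_zero_iff_of_nonneg fun _ _ => sq_nonneg _).mp hE i (mem_univ i)
  have hk : ∀ k (hk : k < n), f ⟨k, hk⟩ = 0 := by
    intro k
    induction k with
    | zero => exact fun _ => h0
    | succ k ih => exact fun hk => (hstep ⟨k, by omega⟩).symm.trans (ih (by omega))
  exact funext fun i => hk i i.2

theorem pathEnergy_add_of_sub_succ_eq (hn : 0 < n) {f : Fin n → ℝ} {δ : ℝ}
    (hf : ∀ i : Fin (n - 1), f ⟨i, by omega⟩ - f ⟨i + 1, by omega⟩ = δ) (g : Fin n → ℝ) :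
    pathEnergy (f + g)
      = pathEnergy f + 2 * δ * (g ⟨0, hn⟩ - g ⟨n - 1, Nat.sub_one_lt_of_lt hn⟩) + pathEnergy g := by
  have hterm : ∀ i : Fin (n - 1),
      ((f + g) ⟨i, by omega⟩ - (f + g) ⟨i + 1, by omega⟩) ^ 2
        = (f ⟨i, by omega⟩ - f ⟨i + 1, by omega⟩) ^ 2
          + 2 * δ * (g ⟨i, by omega⟩ - g ⟨i + 1, by omega⟩)
          + (g ⟨i, by omega⟩ - g ⟨i + 1, by omega⟩) ^ 2 := by
    intro i
    rw [Pi.add_apply, Pi.add_apply, ← hf i]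
    ring
  rw [pathEnergy, sum_congr rfl fun i _ => hterm i, sum_add_distrib, sum_add_distrib, ← mul_sum,
    sum_sub_succ_eq hn g, pathEnergy, pathEnergy]

end PathEnergy

section NesterovLoss

variable {n : ℕ} (hn : 0 < n)

noncomputable def tridiagForm (b c : ℝ) (θ : Fin n → ℝ) : ℝ :=
  b * θ ⟨0, hn⟩ ^ 2 + c * pathEnergy θ + b * θ ⟨n - 1, Nat.sub_one_lt_of_lt hn⟩ ^ 2

noncomputable def nesterovLoss (a b c d : ℝ) (θ : Fin n → ℝ) : ℝ :=
  a / 4 * (1 / 2 * tridiagForm hn b c θ - d * θ ⟨0, hn⟩)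

theorem tridiagForm_nonneg {b c : ℝ} (hb : 0 ≤ b) (hc : 0 ≤ c) (θ : Fin n → ℝ) :
    0 ≤ tridiagForm hn b c θ := by
  unfold tridiagForm
  have := pathEnergy_nonneg θ
  positivity

theorem eq_zero_of_tridiagForm_eq_zero {b c : ℝ} (hb : 0 < b) (hc : 0 < c) {θ : Fin n → ℝ}
    (hQ : tridiagForm hn b c θ = 0) : θ = 0 := by
  unfold tridiagForm at hQ
  have hE := pathEnergy_nonneg θ
  have h0 : b * θ ⟨0, hn⟩ ^ 2 = 0 := by
    nlinarith [sq_nonneg (θ ⟨0, hn⟩), sq_nonneg (θ ⟨n - 1, Nat.sub_one_lt_of_lt hn⟩)]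
  refine eq_zero_of_pathEnergy_eq_zero hn ?_ (by simpa [hb.ne'] using h0)
  nlinarith [sq_nonneg (θ ⟨n - 1, Nat.sub_one_lt_of_lt hn⟩)]

variable {a b c d δ : ℝ} {θ : Fin n → ℝ}

/-- The hypotheses are the rows of the gradient equation `A θ = D`: the interior rows say that `θ`
has constant gaps `δ`, the first and last rows are `hfirst` and `hlast`. -/
theorem nesterovLoss_add_of_gradient_eq_zero
    (hgap : ∀ i : Fin (n - 1), θ ⟨i, by omega⟩ - θ ⟨i + 1, by omega⟩ = δ)
    (hfirst : b * θ ⟨0, hn⟩ + c * δ = d) (hlast : b * θ ⟨n - 1, Nat.sub_one_lt_of_lt hn⟩ = c * δ)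
    (v : Fin n → ℝ) :
    nesterovLoss hn a b c d (θ + v) = nesterovLoss hn a b c d θ + a / 8 * tridiagForm hn b c v := by
  unfold nesterovLoss tridiagForm
  rw [pathEnergy_add_of_sub_succ_eq hn hgap, Pi.add_apply, Pi.add_apply]
  linear_combination
    (a / 4 * v ⟨0, hn⟩) * hfirst + (a / 4 * v ⟨n - 1, Nat.sub_one_lt_of_lt hn⟩) * hlast

theorem nesterovLoss_isUniqueMin_of_gradient_eq_zero (ha : 0 < a) (hb : 0 < b) (hc : 0 < c)
    (hgap : ∀ i : Fin (n - 1), θ ⟨i, by omega⟩ - θ ⟨i + 1, by omega⟩ = δ)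
    (hfirst : b * θ ⟨0, hn⟩ + c * δ = d) (hlast : b * θ ⟨n - 1, Nat.sub_one_lt_of_lt hn⟩ = c * δ) :
    (∀ θ', nesterovLoss hn a b c d θ ≤ nesterovLoss hn a b c d θ') ∧
      ∀ θ', (∀ θ'', nesterovLoss hn a b c d θ' ≤ nesterovLoss hn a b c d θ'') → θ' = θ := by
  have hsplit : ∀ θ', nesterovLoss hn a b c d θ'
      = nesterovLoss hn a b c d θ + a / 8 * tridiagForm hn b c (θ' - θ) := fun θ' => by
    rw [← nesterovLoss_add_of_gradient_eq_zero hn hgap hfirst hlast, add_sub_cancel]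
  have hQ := tridiagForm_nonneg hn hb.le hc.le
  refine ⟨fun θ' => ?_, fun θ' hmin => ?_⟩
  · rw [hsplit θ']
    have := hQ (θ' - θ)
    nlinarith
  · have hle := hmin θ
    rw [hsplit θ'] at hle
    have hQ0 : tridiagForm hn b c (θ' - θ) = 0 := by nlinarith [hQ (θ' - θ)]
    exact sub_eq_zero.mp (eq_zero_of_tridiagForm_eq_zero hn hb hc hQ0)

end NesterovLoss

theorem closedForm_gradient_eq_zero {n : ℕ} (hn : 1 ≤ n) {b c d : ℝ} (hb : 0 < b) (hc : 0 < c)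
    {θ : Fin n → ℝ}
    (hθ : ∀ i : Fin n,
      θ i = d * (((n : ℝ) - (i : ℕ) - 1) * b + c) / (((n : ℝ) - 1) * b ^ 2 + 2 * b * c)) :
    let δ := d * b / (((n : ℝ) - 1) * b ^ 2 + 2 * b * c)
    (∀ i : Fin (n - 1), θ ⟨i, by omega⟩ - θ ⟨i + 1, by omega⟩ = δ) ∧
      b * θ ⟨0, hn⟩ + c * δ = d ∧ b * θ ⟨n - 1, Nat.sub_one_lt_of_lt hn⟩ = c * δ := by
  have hΔ : ((n : ℝ) - 1) * b ^ 2 + 2 * b * c ≠ 0 := by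
    have : (1 : ℝ) ≤ n := by exact_mod_cast hn
    nlinarith [mul_pos hb hc, sq_nonneg b]
  generalize hΔdef : ((n : ℝ) - 1) * b ^ 2 + 2 * b * c = Δ at hθ hΔ ⊢
  intro δ
  refine ⟨fun i => ?_, ?_, ?_⟩ <;> simp only [hθ, δ] <;> push_cast [Nat.cast_sub hn] <;>
    field_simp
  · ring
  · linear_combination d * hΔdef
  · ring

/-- Closed-form minimizer of Nesterov's hard function: the unique minimizer of
`L(θ) = (a/4){(1/2)[b θ₁² + c Σ (θᵢ-θᵢ₊₁)² + b θₙ²] - d θ₁}` has (1-based) coordinates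
`θ*ᵢ = d((n-i)b + c)/((n-1)b² + 2bc)`; in particular it is independent of `a`. -/
theorem stmt17 (n : ℕ) (hn : 1 ≤ n) (a b c d : ℝ)
    (ha : 0 < a) (hb : 0 < b) (hc : 0 < c)
    (Lf : (Fin n → ℝ) → ℝ)
    (hLf : ∀ θ : Fin n → ℝ, Lf θ = (a / 4) *
      ((1 / 2) * (b * (θ ⟨0, by omega⟩) ^ 2
        + c * ∑ i : Fin (n - 1),
            (θ ⟨i.1, by have := i.2; omega⟩ - θ ⟨i.1 + 1, by have := i.2; omega⟩) ^ 2
        + b * (θ ⟨n - 1, by omega⟩) ^ 2)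
      - d * θ ⟨0, by omega⟩))
    (θstar : Fin n → ℝ)
    (hθstar : ∀ i : Fin n,
      θstar i = d * (((n : ℝ) - (i : ℕ) - 1) * b + c) / (((n : ℝ) - 1) * b ^ 2 + 2 * b * c)) :
    (∀ θ : Fin n → ℝ, Lf θstar ≤ Lf θ) ∧
    (∀ θ : Fin n → ℝ, (∀ θ' : Fin n → ℝ, Lf θ ≤ Lf θ') → θ = θstar) := by
  obtain rfl : Lf = nesterovLoss hn a b c d := funext hLf
  obtain ⟨hgap, hfirst, hlast⟩ := closedForm_gradient_eq_zero hn hb hc hθstar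
  exact nesterovLoss_isUniqueMin_of_gradient_eq_zero hn ha hb hc hgap hfirst hlast
end
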